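/- Let n ≥ 3 and A_i = i!/2. The map a_n : A_n → {0, 1, ..., n!/2 − 1} defined by a_n(σ) = Σ_{i=1}^{n−2} inv_i(σ) · A_{n−i} is a bijection. -/

import Mathlib

/-- A signed permutation `π` of `[n]`: `π(i) = ε i · σ(i)` with `σ` a permutation
of `[n]` and signs `ε i ∈ {±1}`.  Positions are encoded by `Fin n`
(position `i ∈ [n]` corresponds to `⟨i-1, _⟩ : Fin n`). -/
structure SignedPerm (n : ℕ) where
  σ : Equiv.Perm (Fin n)
  ε : Fin n → ℤ
  hε : ∀ i, ε i = 1 ∨ ε i = -1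

namespace SignedPerm

variable {n : ℕ}

/-- The signed value `π(i) = ε i · σ(i) ∈ {-n, …, -1, 1, …, n}` (1-based value). -/
def val (π : SignedPerm n) (i : Fin n) : ℤ :=
  π.ε i * ((π.σ i : ℕ) + 1)

/-- The standard basis vector `e i` of `ℝ^n`. -/
def e (i : Fin n) : Fin n → ℝ := Pi.single i 1

/-- The action of a signed permutation on `ℝ^n`, determined by
`π · e i = ε i · e (σ i)`. -/
def act (π : SignedPerm n) (v : Fin n → ℝ) : Fin n → ℝ :=
  fun j => (π.ε (π.σ.symm j) : ℝ) * v (π.σ.symm j)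

/-- The positive root system `Φₙ⁺ = {e k, e i + e j, e i - e j : k, i < j}` of `Bₙ`. -/
def PhiPos (n : ℕ) : Set (Fin n → ℝ) :=
  {v | (∃ k : Fin n, v = e k) ∨ ∃ i j : Fin n, i < j ∧ (v = e i + e j ∨ v = e i - e j)}

/-- The positive roots `Φₙ,ᵢ⁺ = {e i, e i + e j, e i - e j : i < j ≤ n}`. -/
def PhiPosI (n : ℕ) (i : Fin n) : Set (Fin n → ℝ) :=
  {v | v = e i ∨ ∃ j : Fin n, i < j ∧ (v = e i + e j ∨ v = e i - e j)}

/-- The `i`-inversion number `invᵢ π = #{v ∈ Φₙ,ᵢ⁺ : π · v ∈ -Φₙ⁺}`. -/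
noncomputable def invi (i : Fin n) (π : SignedPerm n) : ℕ :=
  Set.ncard {v | v ∈ PhiPosI n i ∧ -(π.act v) ∈ PhiPos n}

/-- The inversion number `inv π = #{v ∈ Φₙ⁺ : π · v ∈ -Φₙ⁺}`. -/
noncomputable def inv (π : SignedPerm n) : ℕ :=
  Set.ncard {v | v ∈ PhiPos n ∧ -(π.act v) ∈ PhiPos n}

end SignedPerm

/-!
For a permutation `σ` (all signs `+1`) the only inverted roots are the `e i - e j` with
`i < j`, `σ j < σ i`, so `invᵢ σ` is the `i`-th entry of the Lehmer code of `σ` and `inv σ` is its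
sum. Read from the right, the Lehmer code is a factorial-base numeral whose `k`-th digit is at
most `k`, and it determines `σ`. Hence `aₙ` takes values below `n!/2` and determines every digit
except the units digit, which is at most `1`; on `Aₙ` the digit sum `inv σ` is even, which fixes
that last digit too. So `aₙ` is injective on `Aₙ`, and `|Aₙ| = n!/2` makes it a bijection.
-/

open Finset Nat

lemma sum_Ico_mul_factorial_div_two_lt {m : ℕ} (hm : 2 ≤ m) {d : ℕ → ℕ} (hd : ∀ k, d k ≤ k) :
    ∑ k ∈ Ico 2 m, d k * (k ! / 2) < m ! / 2 := by
  induction m, hm using Nat.le_induction with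
  | base => simp
  | succ m hm ih =>
    rw [sum_Ico_succ_top hm, factorial_succ, Nat.mul_div_assoc _ (dvd_factorial two_pos hm)]
    nlinarith [Nat.mul_le_mul_right (m ! / 2) (hd m)]

lemma eqOn_of_sum_Ico_mul_factorial_div_two_eq {m : ℕ} {d d' : ℕ → ℕ} (hd : ∀ k, d k ≤ k)
    (hd' : ∀ k, d' k ≤ k)
    (h : ∑ k ∈ Ico 2 m, d k * (k ! / 2) = ∑ k ∈ Ico 2 m, d' k * (k ! / 2)) :
    Set.EqOn d d' (Ico 2 m) := by
  induction m with
  | zero => simp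
  | succ m ih =>
    rcases lt_or_ge m 2 with hm | hm
    · intro k hk
      simp only [coe_Ico, Set.mem_Ico] at hk
      omega
    rw [sum_Ico_succ_top hm, sum_Ico_succ_top hm] at h
    have hlt := sum_Ico_mul_factorial_div_two_lt hm hd
    have hlt' := sum_Ico_mul_factorial_div_two_lt hm hd'
    have hW : 0 < m ! / 2 := by omega
    have htop : d m = d' m := by
      have := congrArg (· / (m ! / 2)) h
      simpa only [Nat.add_mul_div_right _ _ hW, Nat.div_eq_of_lt hlt, Nat.div_eq_of_lt hlt',
        zero_add] using this
    rw [htop, Nat.add_right_cancel_iff] at h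
    intro k hk
    simp only [coe_Ico, Set.mem_Ico] at hk
    rcases lt_or_eq_of_le (Nat.lt_succ_iff.1 hk.2) with hkm | rfl
    · exact ih h (by simp only [coe_Ico, Set.mem_Ico]; omega)
    · exact htop

namespace Equiv.Perm

variable {n : ℕ}

def lehmer (σ : Perm (Fin n)) (i : Fin n) : ℕ := #{j ∈ Ioi i | σ j < σ i}

lemma lehmer_le (σ : Perm (Fin n)) (i : Fin n) : σ.lehmer i ≤ n - 1 - i := by
  rw [← Fin.card_Ioi]
  exact card_filter_le _ _

-- Once `σ` is known below `i`, `lehmer σ i` is the rank of `σ i` among the values still free.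
lemma lehmer_eq_card_lt (σ : Perm (Fin n)) (i : Fin n) :
    σ.lehmer i = #{v ∈ ((Iio i).image σ)ᶜ | v < σ i} := by
  rw [lehmer, ← card_image_of_injective _ σ.injective]
  congr 1
  ext v
  obtain ⟨u, rfl⟩ := σ.surjective v
  simp only [mem_image, mem_filter, mem_Ioi, mem_compl, mem_Iio, σ.injective.eq_iff,
    exists_eq_right]
  refine and_congr_left fun hlt => ⟨not_lt_of_gt, fun hu => lt_of_le_of_ne (not_lt.1 hu) ?_⟩
  rintro rfl
  exact hlt.false

lemma lehmer_lt_lehmer {σ τ : Perm (Fin n)} {i : Fin n} (hagree : ∀ k < i, σ k = τ k)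
    (hlt : σ i < τ i) : σ.lehmer i < τ.lehmer i := by
  have himage : (Iio i).image σ = (Iio i).image τ :=
    image_congr fun k hk => hagree k (mem_Iio.1 hk)
  rw [lehmer_eq_card_lt, lehmer_eq_card_lt, himage]
  refine card_lt_card (ssubset_iff_of_subset ?_ |>.2 ⟨σ i, ?_, ?_⟩)
  · exact monotone_filter_right _ fun v _ (hv : v < σ i) => hv.trans hlt
  · rw [mem_filter, mem_compl, ← himage]
    refine ⟨fun h => ?_, hlt⟩
    obtain ⟨k, hk, hki⟩ := mem_image.1 h
    exact (mem_Iio.1 hk).ne (σ.injective hki)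
  · simp

lemma lehmer_injective : Function.Injective (lehmer (n := n)) := by
  intro σ τ h
  ext i : 1
  induction i using WellFoundedLT.induction with
  | ind i ih =>
    rcases lt_trichotomy (σ i) (τ i) with hlt | heq | hgt
    · exact absurd (congrFun h i) (lehmer_lt_lehmer ih hlt).ne
    · exact heq
    · exact absurd (congrFun h i) (lehmer_lt_lehmer (fun k hk => (ih k hk).symm) hgt).ne'

lemma sign_eq_neg_one_pow_sum_lehmer (σ : Perm (Fin n)) :
    sign σ = (-1) ^ ∑ i, σ.lehmer i := by
  rw [sign_eq_prod_prod_Ioi, ← prod_pow_eq_pow_sum]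
  refine prod_congr rfl fun i _ => ?_
  rw [prod_ite, prod_const_one, one_mul, prod_const, lehmer]
  congr 2
  refine filter_congr fun j hj => ?_
  rw [not_lt, le_iff_lt_or_eq, or_iff_left]
  exact fun h => (mem_Ioi.1 hj).ne (σ.injective h).symm

lemma mem_alternatingGroup_iff_even_sum_lehmer (σ : Perm (Fin n)) :
    σ ∈ alternatingGroup (Fin n) ↔ Even (∑ i, σ.lehmer i) := by
  rw [mem_alternatingGroup, sign_eq_neg_one_pow_sum_lehmer, neg_one_pow_eq_one_iff_even]
  decide

def factorialDigit (σ : Perm (Fin n)) (k : ℕ) : ℕ :=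
  if h : k < n then σ.lehmer (Fin.rev ⟨k, h⟩) else 0

lemma factorialDigit_rev (σ : Perm (Fin n)) (i : Fin n) :
    σ.factorialDigit (Fin.rev i) = σ.lehmer i := by
  rw [factorialDigit, dif_pos (Fin.rev i).isLt, Fin.eta, Fin.rev_rev]

lemma factorialDigit_le (σ : Perm (Fin n)) (k : ℕ) : σ.factorialDigit k ≤ k := by
  unfold factorialDigit
  split_ifs with h
  · have := σ.lehmer_le (Fin.rev ⟨k, h⟩)
    simp only [Fin.val_rev] at this
    omega
  · exact Nat.zero_le k

lemma sum_lehmer_eq_factorialDigit_one_add (hn : 2 ≤ n) (σ : Perm (Fin n)) :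
    ∑ i, σ.lehmer i = σ.factorialDigit 1 + ∑ k ∈ Ico 2 n, σ.factorialDigit k := by
  have hzero : σ.factorialDigit 0 = 0 := Nat.le_zero.1 (σ.factorialDigit_le 0)
  rw [Fintype.sum_equiv Fin.revPerm _ (fun j : Fin n => σ.factorialDigit j)
      fun i => (σ.factorialDigit_rev i).symm,
    Fin.sum_univ_eq_sum_range (σ.factorialDigit ·), ← sum_range_add_sum_Ico _ hn,
    sum_range_succ, sum_range_one, hzero, zero_add]

lemma sum_lehmer_mul_eq_sum_factorialDigit_mul (σ : Perm (Fin n)) :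
    ∑ i ∈ univ.filter (fun i : Fin n => i.val + 1 ≤ n - 2), σ.lehmer i * ((n - 1 - i.val) ! / 2)
      = ∑ k ∈ Ico 2 n, σ.factorialDigit k * (k ! / 2) := by
  refine sum_bij (fun i _ => (Fin.rev i : ℕ)) (fun i hi => ?_)
    (fun i _ j _ h => Fin.rev_injective (Fin.ext h)) (fun k hk => ?_) (fun i _ => ?_)
  · simp only [mem_filter, mem_univ, true_and] at hi
    simp only [mem_Ico, Fin.val_rev]
    omega
  · simp only [mem_Ico] at hk
    refine ⟨Fin.rev ⟨k, hk.2⟩, ?_, by rw [Fin.rev_rev]⟩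
    simp only [mem_filter, mem_univ, true_and, Fin.val_rev]
    omega
  · rw [σ.factorialDigit_rev, Fin.val_rev, Nat.sub_sub, add_comm 1]

lemma eq_of_eqOn_factorialDigit (hn : 2 ≤ n) {σ τ : Perm (Fin n)}
    (hσ : σ ∈ alternatingGroup (Fin n)) (hτ : τ ∈ alternatingGroup (Fin n))
    (h : Set.EqOn σ.factorialDigit τ.factorialDigit (Ico 2 n)) : σ = τ := by
  rw [mem_alternatingGroup_iff_even_sum_lehmer, sum_lehmer_eq_factorialDigit_one_add hn] at hσ hτ
  rw [show ∑ k ∈ Ico 2 n, σ.factorialDigit k = ∑ k ∈ Ico 2 n, τ.factorialDigit k from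
    sum_congr rfl h] at hσ
  have hone : σ.factorialDigit 1 = τ.factorialDigit 1 := by
    have := σ.factorialDigit_le 1
    have := τ.factorialDigit_le 1
    rcases hσ with ⟨a, ha⟩
    rcases hτ with ⟨b, hb⟩
    omega
  refine lehmer_injective (funext fun i => ?_)
  rw [← factorialDigit_rev, ← factorialDigit_rev]
  have := (Fin.rev i).isLt
  rcases Nat.lt_or_ge (Fin.rev i) 2 with hi | hi
  · interval_cases h : (Fin.rev i : ℕ)
    · simp only [Nat.le_zero.1 (σ.factorialDigit_le 0), Nat.le_zero.1 (τ.factorialDigit_le 0)]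
    · exact hone
  · exact h (by simp only [coe_Ico, Set.mem_Ico]; omega)

end Equiv.Perm

namespace SignedPerm

variable {n : ℕ}

def ofPerm (σ : Equiv.Perm (Fin n)) : SignedPerm n := ⟨σ, 1, fun _ => Or.inl rfl⟩

lemma ofPerm_injective : Function.Injective (ofPerm (n := n)) :=
  fun _ _ h => congrArg SignedPerm.σ h

lemma eq_ofPerm_of_forall_ε_eq_one {π : SignedPerm n} (h : ∀ i, π.ε i = 1) : π = ofPerm π.σ := by
  obtain ⟨σ, ε, hε⟩ := π
  simp only [ofPerm, mk.injEq, true_and]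
  exact funext h

lemma e_apply (i j : Fin n) : e i j = if j = i then 1 else 0 := Pi.single_apply i 1 j

lemma e_injective : Function.Injective (e (n := n)) := fun i j h => by
  by_contra hne
  simpa [e_apply, hne] using congrFun h i

lemma act_add (π : SignedPerm n) (v w : Fin n → ℝ) : π.act (v + w) = π.act v + π.act w := by
  funext j
  simp only [act, Pi.add_apply, mul_add]

lemma act_sub (π : SignedPerm n) (v w : Fin n → ℝ) : π.act (v - w) = π.act v - π.act w := by
  funext j
  simp only [act, Pi.sub_apply, mul_sub]

lemma ofPerm_act_e (σ : Equiv.Perm (Fin n)) (i : Fin n) : (ofPerm σ).act (e i) = e (σ i) := by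
  funext j
  simp [act, ofPerm, e_apply, Equiv.symm_apply_eq]

lemma exists_pos_of_mem_PhiPos {v : Fin n → ℝ} (hv : v ∈ PhiPos n) : ∃ m, 0 < v m := by
  rcases hv with ⟨k, rfl⟩ | ⟨i, j, hij, rfl | rfl⟩ <;>
    [exact ⟨k, by simp [e_apply]⟩; exact ⟨i, by simp [e_apply, hij.ne]⟩;
      exact ⟨i, by simp [e_apply, hij.ne]⟩]

lemma neg_e_notMem_PhiPos (a : Fin n) : -e a ∉ PhiPos n := fun h => by
  obtain ⟨m, hm⟩ := exists_pos_of_mem_PhiPos h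
  simp only [Pi.neg_apply, e_apply] at hm
  split_ifs at hm <;> norm_num at hm

lemma neg_add_e_notMem_PhiPos (a b : Fin n) : -(e a + e b) ∉ PhiPos n := fun h => by
  obtain ⟨m, hm⟩ := exists_pos_of_mem_PhiPos h
  simp only [Pi.neg_apply, Pi.add_apply, e_apply] at hm
  split_ifs at hm <;> norm_num at hm

lemma e_sub_e_eq_e_sub_e {a b c d : Fin n} (hab : a ≠ b) (hcd : c ≠ d)
    (h : e a - e b = e c - e d) : a = c ∧ b = d := by
  have hac : a = c := by
    by_contra hne
    have := congrFun h a
    simp only [Pi.sub_apply, e_apply, if_neg hne] at this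
    split_ifs at this <;> norm_num at this
  subst hac
  exact ⟨rfl, e_injective (sub_right_injective h)⟩

lemma e_sub_e_mem_PhiPos_iff {a b : Fin n} (hab : a ≠ b) : e a - e b ∈ PhiPos n ↔ a < b := by
  refine ⟨fun h => ?_, fun h => Or.inr ⟨a, b, h, Or.inr rfl⟩⟩
  rcases h with ⟨k, hk⟩ | ⟨i, j, hij, hk | hk⟩
  · have := congrFun hk b
    simp only [Pi.sub_apply, e_apply, if_neg hab.symm] at this
    split_ifs at this <;> norm_num at this
  · have := congrFun hk b
    simp only [Pi.sub_apply, Pi.add_apply, e_apply, if_neg hab.symm] at this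
    split_ifs at this <;> norm_num at this
  · obtain ⟨rfl, rfl⟩ := e_sub_e_eq_e_sub_e hab hij.ne hk
    exact hij

section ofPerm

variable (σ : Equiv.Perm (Fin n))

lemma neg_ofPerm_act_e_notMem_PhiPos (a : Fin n) : -(ofPerm σ).act (e a) ∉ PhiPos n := by
  rw [ofPerm_act_e]
  exact neg_e_notMem_PhiPos _

lemma neg_ofPerm_act_add_notMem_PhiPos (a b : Fin n) :
    -(ofPerm σ).act (e a + e b) ∉ PhiPos n := by
  rw [act_add, ofPerm_act_e, ofPerm_act_e]
  exact neg_add_e_notMem_PhiPos _ _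

lemma neg_ofPerm_act_sub_mem_PhiPos_iff {a b : Fin n} (hab : a ≠ b) :
    -(ofPerm σ).act (e a - e b) ∈ PhiPos n ↔ σ b < σ a := by
  rw [act_sub, ofPerm_act_e, ofPerm_act_e, neg_sub,
    e_sub_e_mem_PhiPos_iff (σ.injective.ne hab.symm)]

lemma invi_ofPerm (i : Fin n) : invi i (ofPerm σ) = σ.lehmer i := by
  have hset : {v | v ∈ PhiPosI n i ∧ -(ofPerm σ).act v ∈ PhiPos n}
      = (fun j => e i - e j) '' ↑{j ∈ Ioi i | σ j < σ i} := by
    ext v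
    simp only [Set.mem_ofPred_eq, coe_filter, mem_Ioi, Set.mem_image]
    constructor
    · rintro ⟨rfl | ⟨j, hij, rfl | rfl⟩, hneg⟩
      · exact (neg_ofPerm_act_e_notMem_PhiPos σ i hneg).elim
      · exact (neg_ofPerm_act_add_notMem_PhiPos σ i j hneg).elim
      · exact ⟨j, ⟨hij, (neg_ofPerm_act_sub_mem_PhiPos_iff σ hij.ne).1 hneg⟩, rfl⟩
    · rintro ⟨j, ⟨hij, hj⟩, rfl⟩
      exact ⟨Or.inr ⟨j, hij, Or.inr rfl⟩, (neg_ofPerm_act_sub_mem_PhiPos_iff σ hij.ne).2 hj⟩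
  have hinj : Function.Injective fun j => e i - e j :=
    fun _ _ h => e_injective (sub_right_injective h)
  rw [invi, hset, Set.ncard_image_of_injective _ hinj, Set.ncard_coe_finset, Equiv.Perm.lehmer]

lemma inv_ofPerm : inv (ofPerm σ) = ∑ i, σ.lehmer i := by
  have hset : {v | v ∈ PhiPos n ∧ -(ofPerm σ).act v ∈ PhiPos n}
      = (fun p : Σ _ : Fin n, Fin n => e p.1 - e p.2) ''
          ↑(univ.sigma fun i => {j ∈ Ioi i | σ j < σ i}) := by
    ext v
    simp only [Set.mem_ofPred_eq, coe_sigma, coe_univ, coe_filter, mem_Ioi, Set.mem_image,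
      Set.mem_sigma_iff, Set.mem_univ, true_and, Sigma.exists]
    constructor
    · rintro ⟨⟨k, rfl⟩ | ⟨i, j, hij, rfl | rfl⟩, hneg⟩
      · exact (neg_ofPerm_act_e_notMem_PhiPos σ k hneg).elim
      · exact (neg_ofPerm_act_add_notMem_PhiPos σ i j hneg).elim
      · exact ⟨i, j, ⟨hij, (neg_ofPerm_act_sub_mem_PhiPos_iff σ hij.ne).1 hneg⟩, rfl⟩
    · rintro ⟨i, j, ⟨hij, hj⟩, rfl⟩
      exact ⟨Or.inr ⟨i, j, hij, Or.inr rfl⟩, (neg_ofPerm_act_sub_mem_PhiPos_iff σ hij.ne).2 hj⟩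
  have hinj : Set.InjOn (fun p : Σ _ : Fin n, Fin n => e p.1 - e p.2)
      ↑(univ.sigma fun i => {j ∈ Ioi i | σ j < σ i}) := by
    rintro ⟨a, b⟩ hab ⟨c, d⟩ hcd h
    simp only [coe_sigma, coe_univ, coe_filter, mem_Ioi, Set.mem_sigma_iff, Set.mem_univ,
      true_and, Set.mem_ofPred_eq] at hab hcd
    obtain ⟨rfl, rfl⟩ := e_sub_e_eq_e_sub_e hab.1.ne hcd.1.ne h
    rfl
  rw [inv, hset, hinj.ncard_image, Set.ncard_coe_finset, card_sigma]
  rfl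

lemma setOf_ε_eq_one_even_inv_eq_image_ofPerm :
    {π : SignedPerm n | (∀ i, π.ε i = 1) ∧ Even (SignedPerm.inv π)}
      = ofPerm '' (alternatingGroup (Fin n) : Set (Equiv.Perm (Fin n))) := by
  ext π
  simp only [Set.mem_ofPred_eq, Set.mem_image, SetLike.mem_coe,
    Equiv.Perm.mem_alternatingGroup_iff_even_sum_lehmer, ← inv_ofPerm]
  constructor
  · rintro ⟨hε, heven⟩
    rw [eq_ofPerm_of_forall_ε_eq_one hε] at heven
    exact ⟨π.σ, heven, (eq_ofPerm_of_forall_ε_eq_one hε).symm⟩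
  · rintro ⟨σ, hσ, rfl⟩
    exact ⟨fun _ => rfl, hσ⟩

end ofPerm

end SignedPerm

lemma Set.bijOn_of_mapsTo_of_injOn_of_ncard_le {α β : Type*} {f : α → β} {s : Set α}
    {t : Set β} (hmaps : Set.MapsTo f s t) (hinj : Set.InjOn f s) (ht : t.Finite)
    (hcard : t.ncard ≤ s.ncard) : Set.BijOn f s t :=
  ⟨hmaps, hinj,
    (Set.eq_of_subset_of_ncard_le hmaps.image_subset (by rwa [hinj.ncard_image]) ht).superset⟩

lemma ncard_alternatingGroup_fin {n : ℕ} (hn : 2 ≤ n) :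
    (alternatingGroup (Fin n) : Set (Equiv.Perm (Fin n))).ncard = n ! / 2 := by
  have : Nontrivial (Fin n) := Fin.nontrivial_iff_two_le.2 hn
  rw [← Nat.card_coe_set_eq, SetLike.coe_sort_coe, Nat.card_eq_fintype_card,
    card_alternatingGroup, Fintype.card_fin]

lemma Equiv.Perm.bijOn_sum_factorialDigit_mul {n : ℕ} (hn : 2 ≤ n) :
    Set.BijOn (fun σ : Equiv.Perm (Fin n) => ∑ k ∈ Ico 2 n, σ.factorialDigit k * (k ! / 2))
      (alternatingGroup (Fin n)) {m : ℕ | m < n ! / 2} := by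
  refine Set.bijOn_of_mapsTo_of_injOn_of_ncard_le
    (fun σ _ => sum_Ico_mul_factorial_div_two_lt hn σ.factorialDigit_le)
    (fun σ hσ τ hτ h => eq_of_eqOn_factorialDigit hn hσ hτ
      (eqOn_of_sum_Ico_mul_factorial_div_two_eq σ.factorialDigit_le τ.factorialDigit_le h))
    (Set.finite_Iio _) ?_
  rw [ncard_alternatingGroup_fin hn]
  exact (Set.ncard_Iio_nat _).le

open SignedPerm in
/-- With `Aᵢ = i!/2`, the map
`aₙ(σ) = ∑_{i=1}^{n-2} invᵢ(σ) · A_{n-i}` is a bijection from the alternating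
group `Aₙ` (permutations, i.e. all signs positive, with `inv σ` even) onto
`{0, 1, …, n!/2 - 1}` (position `i ∈ [n]` is `i.val + 1` in 1-based indexing,
so `n - i = n - 1 - i.val`). -/
theorem a_bijective (n : ℕ) (hn : 3 ≤ n) :
    Set.BijOn
      (fun π : SignedPerm n =>
        ∑ i ∈ Finset.univ.filter (fun i : Fin n => i.val + 1 ≤ n - 2),
          invi i π * (Nat.factorial (n - 1 - i.val) / 2))
      {π : SignedPerm n | (∀ i, π.ε i = 1) ∧ Even (SignedPerm.inv π)}
      {m : ℕ | m < Nat.factorial n / 2} := by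
  rw [setOf_ε_eq_one_even_inv_eq_image_ofPerm, ← Set.bijOn_comp_iff ofPerm_injective.injOn]
  convert Equiv.Perm.bijOn_sum_factorialDigit_mul (n := n) (by omega) using 1
  funext σ
  simp only [Function.comp_apply, invi_ofPerm, σ.sum_lehmer_mul_eq_sum_factorialDigit_mul]
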